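/- Let T be a rooted tree and B a coloring of T. Call a non-root node v with B(v) ≠ B(parent of v) a shift node of B, let K be the number of shift nodes of B, and assume the no-homoplasy condition: the K + 1 colors consisting of B(root) together with the colors B(v) for the shift nodes v are pairwise distinct. Then the following are equivalent: (a) B is parsimonious, i.e. every coloring B' of T that induces the same leaf partition as B has at least K color changes; (b) the restriction of B to the leaves of T takes exactly K + 1 distinct values. -/

import Mathlib

/-!
Context: rooted trees are given inductively.  A coloring is a tree carrying a natural
number (a color) at each node; its number of color changes is the number of edges with
differently colored endpoints; the leaf partition induced by a coloring is the partition
of the (positionally indexed) leaves into classes of equal color.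

STATEMENT 4: let `B` be a coloring of a rooted tree, call a non-root node `v` with
`B(v) ≠ B(parent v)` a shift node, let `K = changes B` be the number of shift nodes and
assume no homoplasy: the `K + 1` colors consisting of the root color together with the
colors of the shift nodes are pairwise distinct.  Then `B` is parsimonious (every coloring
of the same tree inducing the same leaf partition has at least `K` changes) iff the leaf
colors of `B` take exactly `K + 1` distinct values.
-/

open scoped Classical

/-- Trees with a piece of data of type `C` at each node. -/
inductive CTree (C : Type) : Type where
  | leaf (c : C) : CTree C
  | node (c : C) (ts : List (CTree C)) : CTree C

namespace CTree

variable {C : Type}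

/-- The color at the root. -/
def rootColor : CTree C → C
  | leaf c => c
  | node c _ => c

/-- The underlying (uncolored) shape of a colored tree. -/
def shape : CTree C → CTree Unit
  | leaf _ => leaf ()
  | node _ ts => node () (ts.attach.map (fun s => shape s.1))
decreasing_by have := List.sizeOf_lt_of_mem s.2; simp at *; omega

/-- The list of colors at the leaves, from left to right. -/
def leafColors : CTree C → List C
  | leaf c => [c]
  | node _ ts => (ts.attach.map (fun s => leafColors s.1)).flatten
decreasing_by have := List.sizeOf_lt_of_mem s.2; simp at *; omega

/-- The number of edges `(u, v)` (`v` a child of `u`) with differently colored endpoints. -/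
def changes [DecidableEq C] : CTree C → ℕ
  | leaf _ => 0
  | node c ts =>
      (ts.attach.map (fun s => changes s.1 + if rootColor s.1 ≠ c then 1 else 0)).sum
decreasing_by have := List.sizeOf_lt_of_mem s.2; simp at *; omega

/-- The list of the colors carried by the shift nodes of a coloring, i.e. by the non-root
nodes whose color differs from the one of their parent. -/
def shiftColors [DecidableEq C] : CTree C → List C
  | leaf _ => []
  | node c ts =>
      (ts.attach.map (fun s =>
        shiftColors s.1 ++ if rootColor s.1 ≠ c then [rootColor s.1] else [])).flatten
decreasing_by have := List.sizeOf_lt_of_mem s.2; simp at *; omega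

/-- Every internal node has a nonempty list of children. -/
inductive WF : CTree Unit → Prop
  | leaf : WF (leaf ())
  | node (ts : List (CTree Unit)) (hne : ts ≠ []) (hts : ∀ s ∈ ts, WF s) :
      WF (node () ts)

end CTree

open CTree

set_option linter.unusedSectionVars false
namespace CTree
variable {C : Type} [DecidableEq C]

theorem shape_node (c : C) (ts : List (CTree C)) :
    shape (node c ts) = node () (ts.map shape) := by
  rw [shape]; simp [List.attach_map_val]

theorem leafColors_node (c : C) (ts : List (CTree C)) :
    leafColors (node c ts) = (ts.map leafColors).flatten := by
  rw [leafColors]; simp [List.attach_map_val]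

theorem changes_node (c : C) (ts : List (CTree C)) :
    changes (node c ts) = (ts.map (fun s => changes s + if rootColor s ≠ c then 1 else 0)).sum := by
  rw [changes]; congr 1; exact List.attach_map_val (l := ts) (f := fun s => changes s + if rootColor s ≠ c then 1 else 0)

theorem shiftColors_node (c : C) (ts : List (CTree C)) :
    shiftColors (node c ts) = (ts.map (fun s =>
        shiftColors s ++ if rootColor s ≠ c then [rootColor s] else [])).flatten := by
  rw [shiftColors]; congr 1; exact List.attach_map_val (l := ts) (f := fun s => shiftColors s ++ if rootColor s ≠ c then [rootColor s] else [])

/-- Custom induction principle. -/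
theorem my_ind {P : CTree C → Prop} (hl : ∀ c, P (leaf c))
    (hn : ∀ c ts, (∀ s ∈ ts, P s) → P (node c ts)) : ∀ t, P t
  | leaf c => hl c
  | node c ts => hn c ts (fun s hs => my_ind hl hn s)
decreasing_by have := List.sizeOf_lt_of_mem hs; simp at *; omega

end CTree

set_option linter.unusedSectionVars false
namespace CTree
variable {C : Type} [DecidableEq C]

def numLeaves : CTree Unit → ℕ
  | leaf _ => 1
  | node _ ts => (ts.attach.map (fun s => numLeaves s.1)).sum
decreasing_by have := List.sizeOf_lt_of_mem s.2; simp at *; omega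

theorem numLeaves_node (ts : List (CTree Unit)) :
    numLeaves (node () ts) = (ts.map numLeaves).sum := by
  rw [numLeaves]; congr 1; exact List.attach_map_val (l := ts) (f := numLeaves)

theorem leafColors_length (t : CTree C) : (leafColors t).length = numLeaves (shape t) := by
  induction t using my_ind with
  | hl c => rw [leafColors, shape, numLeaves]; rfl
  | hn c ts ih =>
    rw [leafColors_node, shape_node, numLeaves_node, List.length_flatten, List.map_map,
      List.map_map]
    congr 1
    exact List.map_congr_left fun s hs => ih s hs

theorem changes_eq_length (t : CTree C) : changes t = (shiftColors t).length := by
  induction t using my_ind with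
  | hl c => rw [changes, shiftColors]; rfl
  | hn c ts ih =>
    rw [changes_node, shiftColors_node, List.length_flatten, List.map_map]
    congr 1
    refine List.map_congr_left fun s hs => ?_
    simp only [Function.comp, List.length_append, ih s hs]
    split <;> simp

theorem mem_leafColors (t : CTree C) :
    ∀ x ∈ leafColors t, x = rootColor t ∨ x ∈ shiftColors t := by
  induction t using my_ind with
  | hl c => intro x hx; left; simpa [leafColors, rootColor] using hx
  | hn c ts ih =>
    intro x hx
    rw [leafColors_node, List.mem_flatten] at hx
    obtain ⟨l, hl, hxl⟩ := hx
    rw [List.mem_map] at hl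
    obtain ⟨s, hs, rfl⟩ := hl
    rcases ih s hs x hxl with h | h
    · by_cases hrc : rootColor s = c
      · left; rw [h, hrc]; rfl
      · right
        rw [shiftColors_node, List.mem_flatten]
        exact ⟨_, List.mem_map_of_mem hs, by simp [hrc, h]⟩
    · right
      rw [shiftColors_node, List.mem_flatten]
      exact ⟨_, List.mem_map_of_mem hs, by simp [h]⟩

theorem leafColors_ne_nil (t : CTree C) (h : WF (shape t)) : leafColors t ≠ [] := by
  induction t using my_ind with
  | hl c => simp [leafColors]
  | hn c ts ih =>
    rw [shape_node] at h
    cases h with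
    | node _ hne hts =>
      have hts' : ∀ s ∈ ts, WF (shape s) := fun s hs => hts _ (List.mem_map_of_mem hs)
      have hne' : ts ≠ [] := fun h => hne (by simp [h])
      obtain ⟨s0, rest, rfl⟩ := List.exists_cons_of_ne_nil hne'
      have h0 := ih s0 (by simp) (hts' s0 (by simp))
      obtain ⟨x, hx⟩ := List.exists_mem_of_ne_nil _ h0
      rw [leafColors_node]
      exact List.ne_nil_of_mem (List.mem_flatten.2 ⟨_, List.mem_map_of_mem (by simp), hx⟩)

theorem card_le_changes (t : CTree C) :
    (leafColors t).toFinset.card ≤ changes t + 1 := by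
  have hsub : (leafColors t).toFinset ⊆ (rootColor t :: shiftColors t).toFinset := by
    intro x hx
    rw [List.mem_toFinset] at hx ⊢
    rcases mem_leafColors t x hx with h | h
    · simp [h]
    · simp [h]
  calc (leafColors t).toFinset.card ≤ (rootColor t :: shiftColors t).toFinset.card :=
        Finset.card_le_card hsub
    _ ≤ (rootColor t :: shiftColors t).length := List.toFinset_card_le _
    _ = changes t + 1 := by simp [changes_eq_length, Nat.add_comm]

end CTree

section Counting
variable {α : Type} [DecidableEq α]

theorem card_eq_sdiff_add (A : Finset α) (c : α) :
    A.card = (A \ {c}).card + (if c ∈ A then 1 else 0) := by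
  by_cases h : c ∈ A
  · rw [if_pos h, Finset.card_sdiff_of_subset (by simpa using h)]
    have : 1 ≤ A.card := Finset.card_pos.2 ⟨c, h⟩
    simp; omega
  · rw [if_neg h, Finset.sdiff_eq_self_of_disjoint (by simpa using h)]; ring

theorem card_flatten_sdiff (c : α) (L : List (List α))
    (hdis : List.Pairwise (fun a b => Disjoint (a.toFinset \ {c}) (b.toFinset \ {c})) L) :
    (L.flatten.toFinset \ {c}).card = (L.map (fun l => (l.toFinset \ {c}).card)).sum := by
  induction L with
  | nil => simp
  | cons l L ih =>
    have hd : Disjoint (l.toFinset \ {c}) (L.flatten.toFinset \ {c}) := by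
      rw [Finset.disjoint_left]
      intro a ha ha'
      rw [Finset.mem_sdiff, List.mem_toFinset, List.mem_flatten] at ha'
      obtain ⟨⟨l', hl', hal'⟩, hac⟩ := ha'
      have := (List.pairwise_cons.1 hdis).1 l' hl'
      exact (Finset.disjoint_left.1 this ha) (by simp [hal', hac])
    rw [List.flatten_cons, List.toFinset_append, Finset.union_sdiff_distrib,
      Finset.card_union_of_disjoint hd, List.map_cons, List.sum_cons,
      ih (List.pairwise_cons.1 hdis).2]

theorem card_image_eq_of_iff (s : Finset ℕ) (f g : ℕ → ℕ)
    (h : ∀ i ∈ s, ∀ j ∈ s, (f i = f j ↔ g i = g j)) :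
    (s.image f).card = (s.image g).card := by
  induction s using Finset.induction with
  | empty => simp
  | @insert a s' ha ih =>
    have h' : ∀ i ∈ s', ∀ j ∈ s', (f i = f j ↔ g i = g j) :=
      fun i hi j hj => h i (Finset.mem_insert_of_mem hi) j (Finset.mem_insert_of_mem hj)
    have hmem : f a ∈ s'.image f ↔ g a ∈ s'.image g := by
      simp only [Finset.mem_image]
      constructor
      · rintro ⟨j, hj, hfj⟩
        exact ⟨j, hj, (h j (Finset.mem_insert_of_mem hj) a (Finset.mem_insert_self a s')).1 hfj⟩
      · rintro ⟨j, hj, hgj⟩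
        exact ⟨j, hj, (h j (Finset.mem_insert_of_mem hj) a (Finset.mem_insert_self a s')).2 hgj⟩
    rw [Finset.image_insert, Finset.image_insert]
    by_cases hf : f a ∈ s'.image f
    · rw [Finset.insert_eq_self.2 hf, Finset.insert_eq_self.2 (hmem.1 hf)]
      exact ih h'
    · rw [Finset.card_insert_of_notMem hf,
        Finset.card_insert_of_notMem (fun hg => hf (hmem.2 hg)), ih h']

theorem toFinset_eq_image (l : List ℕ) :
    l.toFinset = (Finset.range l.length).image (fun i => l.getD i 0) := by
  ext x
  simp only [List.mem_toFinset, Finset.mem_image, Finset.mem_range]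
  constructor
  · intro hx
    obtain ⟨i, hi, hix⟩ := List.mem_iff_getElem.1 hx
    exact ⟨i, hi, by rw [List.getD_eq_getElem _ _ hi, hix]⟩
  · rintro ⟨i, hi, rfl⟩
    rw [List.getD_eq_getElem _ _ hi]
    exact List.getElem_mem hi

theorem sum_map_add {β : Type} (l : List β) (f g : β → ℕ) :
    (l.map (fun x => f x + g x)).sum = (l.map f).sum + (l.map g).sum := by
  induction l with
  | nil => simp
  | cons x l ih => simp [ih]; omega

end Counting

namespace CTree

theorem key : ∀ (t : CTree ℕ), WF (shape t) → (rootColor t :: shiftColors t).Nodup →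
    ∃ t' : CTree ℕ, shape t' = shape t ∧ leafColors t' = leafColors t ∧
      rootColor t' ∈ leafColors t ∧
      changes t' + (if rootColor t' ≠ rootColor t then 1 else 0)
        + (if rootColor t ∈ leafColors t then 1 else 0) ≤ (leafColors t).toFinset.card := by
  intro t
  induction t using my_ind with
  | hl c =>
    intro _ _
    refine ⟨leaf c, rfl, rfl, by simp [leafColors, rootColor], ?_⟩
    rw [changes]
    simp [leafColors, rootColor]
  | hn c ts ih =>
    intro hWF hNH
    -- basic setup
    rw [shape_node] at hWF
    have hwf : ∀ s ∈ ts, WF (shape s) := by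
      cases hWF with | node _ _ hts => exact fun s hs => hts _ (List.mem_map_of_mem hs)
    have hne : ts ≠ [] := by
      cases hWF with | node _ hne _ => exact fun h => hne (by simp [h])
    set g : CTree ℕ → List ℕ :=
      fun s => shiftColors s ++ if rootColor s ≠ c then [rootColor s] else [] with hg
    have hNH' : (c :: (ts.map g).flatten).Nodup := by
      have : rootColor (node c ts) = c := rfl
      rw [this, shiftColors_node] at hNH
      exact hNH
    have hc : c ∉ (ts.map g).flatten := (List.nodup_cons.1 hNH').1
    have hnd : (ts.map g).flatten.Nodup := (List.nodup_cons.1 hNH').2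
    have hpair : List.Pairwise (fun a b => List.Disjoint (g a) (g b)) ts :=
      List.pairwise_map.1 (List.nodup_flatten.1 hnd).2
    have hgnodup : ∀ s ∈ ts, (g s).Nodup :=
      fun s hs => (List.nodup_flatten.1 hnd).1 _ (List.mem_map_of_mem hs)
    have hcg : ∀ s ∈ ts, c ∉ g s :=
      fun s hs h => hc (List.mem_flatten.2 ⟨_, List.mem_map_of_mem hs, h⟩)
    -- no-homoplasy for children
    have hchildNH : ∀ s ∈ ts, (rootColor s :: shiftColors s).Nodup := by
      intro s hs
      rw [List.nodup_cons]
      have hsh : List.Sublist (shiftColors s) (g s) := List.sublist_append_left _ _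
      refine ⟨?_, ((hgnodup s hs).sublist hsh)⟩
      by_cases hrc : rootColor s = c
      · intro hmem
        exact hcg s hs (hrc ▸ hsh.mem hmem)
      · have := hgnodup s hs
        rw [hg] at this
        simp only [if_pos hrc] at this
        rw [List.nodup_append] at this
        intro hmem
        exact this.2.2 _ hmem _ (by simp) rfl
    -- c is not a leaf color of a shift child
    have hcleaf : ∀ s ∈ ts, rootColor s ≠ c → c ∉ leafColors s := by
      intro s hs hrc hmem
      rcases mem_leafColors s c hmem with h | h
      · exact hrc h.symm
      · exact hcg s hs (List.mem_append_left _ h)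
    -- leaf colors minus c sit inside g s
    have hsub : ∀ s ∈ ts, (leafColors s).toFinset \ {c} ⊆ (g s).toFinset := by
      intro s hs x hx
      rw [Finset.mem_sdiff, List.mem_toFinset, Finset.mem_singleton] at hx
      obtain ⟨hxl, hxc⟩ := hx
      rw [List.mem_toFinset, hg]
      rcases mem_leafColors s x hxl with h | h
      · have hrc : rootColor s ≠ c := fun hh => hxc (h.trans hh)
        simp [if_pos hrc, h]
      · exact List.mem_append_left _ h
    -- pairwise disjointness of leaf color sets minus c
    have hdis : List.Pairwise (fun a b => Disjoint (a.toFinset \ {c}) (b.toFinset \ {c}))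
        (ts.map leafColors) := by
      rw [List.pairwise_map]
      rw [List.Pairwise.and_mem] at hpair
      refine hpair.imp ?_
      rintro a b ⟨ha, hb, hab⟩
      rw [Finset.disjoint_left]
      intro x hxa hxb
      have h1 := hsub a ha hxa
      have h2 := hsub b hb hxb
      rw [List.mem_toFinset] at h1 h2
      exact hab h1 h2
    -- recolored children
    have hchild : ∀ s ∈ ts, ∃ t' : CTree ℕ, shape t' = shape s ∧ leafColors t' = leafColors s ∧
        rootColor t' ∈ leafColors s ∧
        changes t' + (if rootColor t' ≠ c then 1 else 0) ≤
          ((leafColors s).toFinset \ {c}).card := by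
      intro s hs
      obtain ⟨t', h1, h2, h3, h4⟩ := ih s hs (hwf s hs) (hchildNH s hs)
      refine ⟨t', h1, h2, h3, ?_⟩
      have hcard := card_eq_sdiff_add (leafColors s).toFinset c
      simp only [List.mem_toFinset] at hcard
      by_cases hrc : rootColor s = c
      · simp only [hrc] at h4
        split_ifs at h4 hcard ⊢ <;> omega
      · have hcl : c ∉ leafColors s := hcleaf s hs hrc
        have hrt : rootColor t' ≠ c := fun h => hcl (h ▸ h3)
        rw [if_neg hcl] at hcard
        rw [if_pos hrt]
        by_cases h5 : rootColor t' = rootColor s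
        · have : rootColor s ∈ leafColors s := h5 ▸ h3
          rw [if_neg (by simp [h5]), if_pos this] at h4
          omega
        · rw [if_pos h5] at h4
          split_ifs at h4 <;> omega
    choose F hF1 hF2 hF3 hF4 using hchild
    set ts' : List (CTree ℕ) := ts.attach.map (fun s => F s.1 s.2) with hts'
    -- shape and leafColors of recoloring
    have hshape' : ∀ c' : ℕ, shape (node c' ts') = shape (node c ts) := by
      intro c'
      rw [shape_node, shape_node, hts', List.map_map]
      congr 1
      calc ts.attach.map (shape ∘ fun s => F s.1 s.2)
          = ts.attach.map (fun s => shape s.1) :=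
            List.map_congr_left (fun s _ => hF1 s.1 s.2)
        _ = ts.map shape := List.attach_map_val (l := ts) (f := shape)
    have hleaf' : ∀ c' : ℕ, leafColors (node c' ts') = leafColors (node c ts) := by
      intro c'
      rw [leafColors_node, leafColors_node, hts', List.map_map]
      congr 1
      calc ts.attach.map (leafColors ∘ fun s => F s.1 s.2)
          = ts.attach.map (fun s => leafColors s.1) :=
            List.map_congr_left (fun s _ => hF2 s.1 s.2)
        _ = ts.map leafColors := List.attach_map_val (l := ts) (f := leafColors)
    have hchanges' : ∀ c' : ℕ, changes (node c' ts') =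
        (ts.attach.map (fun s => changes (F s.1 s.2)
          + if rootColor (F s.1 s.2) ≠ c' then 1 else 0)).sum := by
      intro c'
      rw [changes_node, hts', List.map_map]
      rfl
    -- total of per-child bounds
    have hsumcard : (ts.attach.map (fun s => ((leafColors s.1).toFinset \ {c}).card)).sum =
        ((ts.map leafColors).flatten.toFinset \ {c}).card := by
      rw [card_flatten_sdiff c _ hdis, List.map_map,
        List.attach_map_val (l := ts) (f := fun s => ((leafColors s).toFinset \ {c}).card)]
      rfl
    have hroot : rootColor (node c ts) = c := rfl
    rw [hroot]
    by_cases hcm : c ∈ leafColors (node c ts)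
    · -- case: c appears among the leaves; recolor with root color c
      refine ⟨node c ts', hshape' c, hleaf' c, ?_, ?_⟩
      · have : rootColor (node c ts') = c := rfl
        rw [this]; exact hcm
      · have hb : changes (node c ts') ≤ ((ts.map leafColors).flatten.toFinset \ {c}).card := by
          rw [hchanges' c, ← hsumcard]
          exact List.sum_le_sum (fun s _ => hF4 s.1 s.2)
        have hcard := card_eq_sdiff_add ((ts.map leafColors).flatten).toFinset c
        simp only [List.mem_toFinset] at hcard
        rw [leafColors_node] at hcm
        rw [if_pos hcm] at hcard
        have hrr : rootColor (node c ts') = c := rfl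
        simp only [hrr, leafColors_node, ne_eq, not_true_eq_false, if_false, ite_false,
          if_pos hcm]
        omega
    · -- case: c does not appear among the leaves
      obtain ⟨s0, h0⟩ := List.exists_mem_of_ne_nil ts hne
      set c' := rootColor (F s0 h0) with hc'
      have hcl' : ∀ s (hs : s ∈ ts), rootColor (F s hs) ≠ c := by
        intro s hs h
        apply hcm
        rw [leafColors_node, List.mem_flatten]
        exact ⟨_, List.mem_map_of_mem hs, h ▸ hF3 s hs⟩
      refine ⟨node c' ts', hshape' c', hleaf' c', ?_, ?_⟩
      · have : rootColor (node c' ts') = c' := rfl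
        rw [this, leafColors_node, List.mem_flatten]
        exact ⟨_, List.mem_map_of_mem h0, hF3 s0 h0⟩
      · -- per-element: changes + [≠ c'] + [= c'] ≤ card
        have hper : ∀ s ∈ ts.attach,
            (changes (F s.1 s.2) + if rootColor (F s.1 s.2) ≠ c' then 1 else 0)
            + (if rootColor (F s.1 s.2) = c' then 1 else 0)
            ≤ ((leafColors s.1).toFinset \ {c}).card := by
          intro s _
          have h4 := hF4 s.1 s.2
          rw [if_pos (hcl' s.1 s.2)] at h4
          by_cases h : rootColor (F s.1 s.2) = c' <;> simp [h] <;> omega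
        have hsum := List.sum_le_sum hper
        rw [sum_map_add] at hsum
        have hone : (1 : ℕ) ≤ (ts.attach.map
            (fun s => if rootColor (F s.1 s.2) = c' then 1 else 0)).sum := by
          apply List.single_le_sum (fun x _ => Nat.zero_le x)
          refine List.mem_map.2 ⟨⟨s0, h0⟩, List.mem_attach _ _, ?_⟩
          simp [hc']
        rw [hsumcard] at hsum
        have hcard := card_eq_sdiff_add ((ts.map leafColors).flatten).toFinset c
        simp only [List.mem_toFinset] at hcard
        rw [leafColors_node] at hcm
        rw [if_neg hcm] at hcard
        have hrr : rootColor (node c' ts') = c' := rfl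
        rw [hrr, if_pos (hcl' s0 h0), if_neg (leafColors_node c ts ▸ hcm), leafColors_node]
        have := hchanges' c'
        omega

end CTree


theorem stmt4 (B : CTree ℕ) (hWF : WF (shape B))
    -- no homoplasy: the root color and the shift colors are pairwise distinct
    (hNH : (rootColor B :: shiftColors B).Nodup) :
    -- (a) `B` is parsimonious: every coloring of the same tree inducing the same
    -- leaf partition has at least `changes B` color changes
    ((∀ B' : CTree ℕ, shape B' = shape B →
        (∀ i j : ℕ, i < (leafColors B).length → j < (leafColors B).length →
          ((leafColors B').getD i 0 = (leafColors B').getD j 0 ↔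
            (leafColors B).getD i 0 = (leafColors B).getD j 0)) →
        changes B ≤ changes B')
      ↔
    -- (b) the leaf colors of `B` take exactly `changes B + 1` distinct values
      (leafColors B).toFinset.card = changes B + 1) := by
  constructor
  · intro ha
    obtain ⟨t', h1, h2, h3, h4⟩ := key B hWF hNH
    have hK : changes B ≤ changes t' := ha t' h1 (by intro i j _ _; rw [h2])
    have hcardle := card_le_changes B
    have h5 : changes t' + 1 ≤ (leafColors B).toFinset.card := by
      by_cases h : rootColor t' = rootColor B
      · have hm : rootColor B ∈ leafColors B := h ▸ h3
        rw [if_neg (by simp [h]), if_pos hm] at h4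
        omega
      · rw [if_pos h] at h4
        omega
    omega
  · intro hb B' hshape hpart
    have hlen : (leafColors B').length = (leafColors B).length := by
      rw [leafColors_length, leafColors_length, hshape]
    have hcard : (leafColors B').toFinset.card = (leafColors B).toFinset.card := by
      rw [toFinset_eq_image, toFinset_eq_image, hlen]
      exact card_image_eq_of_iff _ _ _ (fun i hi j hj =>
        hpart i j (Finset.mem_range.1 hi) (Finset.mem_range.1 hj))
    have := card_le_changes B'
    omega
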